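/- Let U be a d×d unitary with d = 2^n. The channel representation Û has exactly one non-zero entry in each row and each column, that entry being ±1, if and only if U is a Clifford unitary. -/

import Mathlib

open Matrix Complex

/-- Length-`n` vectors over `𝔽₂`, indexing computational basis states of `n` qubits. -/
abbrev QVec (n : ℕ) := Fin n → ZMod 2

/-- Integer (here: natural number) dot product of two 0/1 vectors. -/
def dotN {n : ℕ} (a b : QVec n) : ℕ := ∑ i, (a i).val * (b i).val

/-- The `n`-qubit Pauli matrix `P_{a,b}`. -/
noncomputable def Pauli {n : ℕ} (a b : QVec n) : Matrix (QVec n) (QVec n) ℂ :=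
  fun x y => if x = y + a then Complex.I ^ dotN a b * (-1 : ℂ) ^ dotN b y else 0

/-- A `2^n × 2^n` unitary is Clifford if it maps every Pauli matrix to a
Pauli matrix up to a sign `±1`, under conjugation. -/
def IsClifford {n : ℕ} (C : Matrix (QVec n) (QVec n) ℂ) : Prop :=
  C ∈ Matrix.unitaryGroup (QVec n) ℂ ∧
    ∀ a b : QVec n, ∃ a' b' : QVec n, ∃ ε : ℂ, (ε = 1 ∨ ε = -1) ∧
      C * Pauli a b * Cᴴ = ε • Pauli a' b'

/-- The channel representation `Û` of a `2^n × 2^n` matrix `U`: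
rows/columns indexed by Pauli matrices, `Û_{rs} = (1/2^n) Tr(P_r U P_s U†)`. -/
noncomputable def chan {n : ℕ} (U : Matrix (QVec n) (QVec n) ℂ) :
    Matrix (QVec n × QVec n) (QVec n × QVec n) ℂ :=
  fun r s => ((1 : ℂ) / 2 ^ n) * Matrix.trace (Pauli r.1 r.2 * U * Pauli s.1 s.2 * Uᴴ)

lemma neg_one_pow_congr' {m k : ℕ} (h : (m : ZMod 2) = (k : ZMod 2)) :
    (-1:ℂ)^m = (-1:ℂ)^k := by
  have h2 : m % 2 = k % 2 := by rwa [ZMod.natCast_eq_natCast_iff, Nat.ModEq] at h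
  conv_lhs => rw [← Nat.div_add_mod m 2]
  conv_rhs => rw [← Nat.div_add_mod k 2]
  rw [pow_add, pow_add, pow_mul, pow_mul, h2]
  norm_num

lemma dotN_cast {n : ℕ} (a b : QVec n) :
    ((dotN a b : ℕ) : ZMod 2) = ∑ i, a i * b i := by
  unfold dotN; push_cast; simp [ZMod.natCast_val, ZMod.cast_id]

lemma dotN_comm {n : ℕ} (a b : QVec n) : dotN a b = dotN b a := by
  unfold dotN; exact Finset.sum_congr rfl fun i _ => Nat.mul_comm _ _

lemma qvec_add_self {n : ℕ} (a : QVec n) : a + a = 0 := by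
  funext i; exact CharTwo.add_self_eq_zero _

lemma qvec_eq_of_add_eq_zero {n : ℕ} {a b : QVec n} (h : a + b = 0) : a = b := by
  funext i
  have := congrFun h i
  simp only [Pi.add_apply, Pi.zero_apply] at this
  revert this
  generalize a i = p; generalize b i = q
  revert p q; decide

lemma trace_pauli_mul {n : ℕ} (a b : QVec n) (M : Matrix (QVec n) (QVec n) ℂ) :
    Matrix.trace (Pauli a b * M) =
      ∑ y, Complex.I ^ dotN a b * (-1:ℂ)^(dotN b y) * M y (y + a) := by
  rw [Matrix.trace]
  simp only [Matrix.diag, Matrix.mul_apply, Pauli, ite_mul, zero_mul]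
  rw [Finset.sum_comm]
  refine Finset.sum_congr rfl fun y _ => ?_
  simp [Finset.sum_ite_eq']

lemma sum_neg_one_pow {n : ℕ} (w : QVec n) :
    ∑ b : QVec n, (-1:ℂ)^(dotN b w) = if w = 0 then (2^n : ℂ) else 0 := by
  by_cases hw : w = 0
  · subst hw
    have : ∀ b : QVec n, dotN b 0 = 0 := by intro b; simp [dotN]
    simp [this, Finset.card_univ]
  · rw [if_neg hw]
    obtain ⟨i₀, hi₀⟩ : ∃ i, w i ≠ 0 := by
      by_contra h; push_neg at h; exact hw (funext fun i => h i)
    set e : QVec n := Pi.single i₀ 1 with he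
    have hde : ∀ b : QVec n, (-1:ℂ)^(dotN (b + e) w) = -(-1:ℂ)^(dotN b w) := by
      intro b
      have h1 : ((dotN (b+e) w : ℕ) : ZMod 2) = ((dotN b w + 1 : ℕ) : ZMod 2) := by
        rw [dotN_cast]; push_cast [dotN_cast]
        have hw1 : w i₀ = 1 := by
          have h := hi₀; revert h; generalize w i₀ = c; revert c; decide
        have : ∑ i, (b + e) i * w i = (∑ i, b i * w i) + ∑ i, e i * w i := by
          rw [← Finset.sum_add_distrib]
          exact Finset.sum_congr rfl fun i _ => by simp [Pi.add_apply, add_mul]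
        rw [this]
        congr 1
        rw [he, Finset.sum_eq_single i₀ (fun i _ hne => by simp [Pi.single_eq_of_ne hne])
          (fun h => absurd (Finset.mem_univ i₀) h)]
        simp [hw1]
      rw [neg_one_pow_congr' h1, pow_add]; ring
    apply Finset.sum_involution (fun b _ => b + e)
    · intro b _
      show (-1:ℂ)^(dotN b w) + (-1:ℂ)^(dotN (b+e) w) = 0
      rw [hde b]; ring
    · intro b _ _ hcon
      have hcon' : b + e = b + 0 := by rwa [add_zero]
      have : e = 0 := add_left_cancel hcon'
      rw [he] at this
      have := congrFun this i₀
      simp at this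
    · intro b _
      exact Finset.mem_univ _
    · intro b _
      show b + e + e = b
      rw [add_assoc, qvec_add_self, add_zero]

lemma trace_pauli_pauli {n : ℕ} (a b a' b' : QVec n) :
    Matrix.trace (Pauli a b * Pauli a' b') =
      if a = a' ∧ b = b' then (2^n : ℂ) else 0 := by
  rw [trace_pauli_mul]
  by_cases ha : a = a'
  · subst ha
    have hyy : ∀ y : QVec n, (y + a) + a = y := fun y => by
      rw [add_assoc, qvec_add_self, add_zero]
    have hP : ∀ y, Pauli a b' y (y + a)
        = Complex.I ^ dotN a b' * (-1:ℂ)^(dotN b' (y+a)) := by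
      intro y; rw [Pauli, if_pos (by rw [hyy])]
    have step : ∀ y : QVec n,
        Complex.I ^ dotN a b * (-1:ℂ)^(dotN b y) * Pauli a b' y (y+a)
        = (Complex.I ^ dotN a b * Complex.I ^ dotN a b' * (-1:ℂ)^(dotN b' a))
            * (-1:ℂ)^(dotN y (b+b')) := by
      intro y
      have sub : (-1:ℂ)^(dotN b y) * (-1:ℂ)^(dotN b' (y+a))
          = (-1:ℂ)^(dotN b' a) * (-1:ℂ)^(dotN y (b+b')) := by
        rw [← pow_add, ← pow_add]
        apply neg_one_pow_congr'
        push_cast [dotN_cast]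
        rw [← Finset.sum_add_distrib, ← Finset.sum_add_distrib]
        exact Finset.sum_congr rfl fun i _ => by simp only [Pi.add_apply]; ring
      rw [hP y]
      calc Complex.I ^ dotN a b * (-1:ℂ)^(dotN b y)
            * (Complex.I ^ dotN a b' * (-1:ℂ)^(dotN b' (y+a)))
          = (Complex.I ^ dotN a b * Complex.I ^ dotN a b')
              * ((-1:ℂ)^(dotN b y) * (-1:ℂ)^(dotN b' (y+a))) := by ring
        _ = _ := by rw [sub]; ring
    rw [Finset.sum_congr rfl (fun y _ => step y), ← Finset.mul_sum, sum_neg_one_pow]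
    by_cases hb : b = b'
    · subst hb
      rw [if_pos (qvec_add_self b), if_pos ⟨rfl, rfl⟩]
      have h1 : Complex.I ^ dotN a b * Complex.I ^ dotN a b = (-1:ℂ)^(dotN a b) := by
        rw [← mul_pow, Complex.I_mul_I]
      rw [h1, dotN_comm a b, ← mul_pow]
      norm_num
    · rw [if_neg (fun h => hb (qvec_eq_of_add_eq_zero h)),
        if_neg (fun h => hb h.2), mul_zero]
  · rw [if_neg (fun hc => ha hc.1)]
    refine Finset.sum_eq_zero fun y _ => ?_
    have : Pauli a' b' y (y + a) = 0 := by
      rw [Pauli, if_neg]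
      intro h
      rw [add_assoc] at h
      exact ha (qvec_eq_of_add_eq_zero (left_eq_add.mp h))
    rw [this, mul_zero]

lemma pauli_expansion {n : ℕ} (M : Matrix (QVec n) (QVec n) ℂ) :
    ∑ r : QVec n × QVec n,
      (((1:ℂ)/2^n) * Matrix.trace (Pauli r.1 r.2 * M)) • Pauli r.1 r.2 = M := by
  ext x y
  rw [Matrix.sum_apply]
  simp only [Matrix.smul_apply, smul_eq_mul]
  rw [Fintype.sum_prod_type]
  have step1 : ∀ a : QVec n,
      (∑ b, ((1:ℂ)/2^n * Matrix.trace (Pauli a b * M)) * Pauli a b x y)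
        = if a = x + y then M x y else 0 := by
    intro a
    by_cases h : a = x + y
    · rw [if_pos h]
      have hxy : x = y + a := by
        rw [h, add_comm x y, ← add_assoc, qvec_add_self, zero_add]
      have hPxy : ∀ b : QVec n, Pauli a b x y
          = Complex.I ^ dotN a b * (-1:ℂ)^(dotN b y) := fun b => by
        rw [Pauli, if_pos hxy]
      have hz : ∀ b z : QVec n,
          Complex.I ^ dotN a b * (-1:ℂ)^(dotN b z) * M z (z + a)
            * (Complex.I ^ dotN a b * (-1:ℂ)^(dotN b y))
          = (-1:ℂ)^(dotN b (a + z + y)) * M z (z + a) := by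
        intro b z
        have sub : Complex.I ^ dotN a b * (-1:ℂ)^(dotN b z)
            * (Complex.I ^ dotN a b * (-1:ℂ)^(dotN b y))
            = (-1:ℂ)^(dotN b (a + z + y)) := by
          calc Complex.I ^ dotN a b * (-1:ℂ)^(dotN b z)
              * (Complex.I ^ dotN a b * (-1:ℂ)^(dotN b y))
              = (Complex.I * Complex.I) ^ dotN a b
                  * ((-1:ℂ)^(dotN b z) * (-1:ℂ)^(dotN b y)) := by
                rw [mul_pow]; ring
            _ = (-1:ℂ)^(dotN a b + (dotN b z + dotN b y)) := by
                rw [Complex.I_mul_I, ← pow_add, ← pow_add]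
            _ = (-1:ℂ)^(dotN b (a + z + y)) := by
                apply neg_one_pow_congr'
                push_cast [dotN_cast]
                rw [← Finset.sum_add_distrib, ← Finset.sum_add_distrib]
                exact Finset.sum_congr rfl fun i _ => by simp only [Pi.add_apply]; ring
        calc Complex.I ^ dotN a b * (-1:ℂ)^(dotN b z) * M z (z + a)
            * (Complex.I ^ dotN a b * (-1:ℂ)^(dotN b y))
            = Complex.I ^ dotN a b * (-1:ℂ)^(dotN b z)
                * (Complex.I ^ dotN a b * (-1:ℂ)^(dotN b y)) * M z (z + a) := by ring
          _ = _ := by rw [sub]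
      calc (∑ b, ((1:ℂ)/2^n * Matrix.trace (Pauli a b * M)) * Pauli a b x y)
          = ∑ b : QVec n, (1:ℂ)/2^n
              * ∑ z, (-1:ℂ)^(dotN b (a + z + y)) * M z (z + a) := by
            refine Finset.sum_congr rfl fun b _ => ?_
            rw [hPxy b, trace_pauli_mul, mul_assoc]
            congr 1
            rw [Finset.sum_mul]
            exact Finset.sum_congr rfl fun z _ => hz b z
        _ = (1:ℂ)/2^n * ∑ z : QVec n,
              (∑ b : QVec n, (-1:ℂ)^(dotN b (a + z + y))) * M z (z + a) := by
            rw [← Finset.mul_sum]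
            congr 1
            rw [Finset.sum_comm]
            exact Finset.sum_congr rfl fun z _ => (Finset.sum_mul _ _ _).symm
        _ = (1:ℂ)/2^n * ∑ z : QVec n,
              (if z = a + y then (2^n:ℂ) else 0) * M z (z + a) := by
            congr 1
            refine Finset.sum_congr rfl fun z _ => ?_
            rw [sum_neg_one_pow]
            congr 1
            refine if_congr ?_ rfl rfl
            constructor
            · intro h0
              refine (qvec_eq_of_add_eq_zero (a := a + y) (b := z) ?_).symm
              calc a + y + z = a + z + y := by ring
                _ = 0 := h0
            · intro hzz
              rw [hzz]
              calc a + (a + y) + y = (a + a) + (y + y) := by ring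
                _ = 0 := by rw [qvec_add_self, qvec_add_self, add_zero]
        _ = (1:ℂ)/2^n * ((2^n:ℂ) * M (a + y) ((a + y) + a)) := by
            congr 1
            simp [ite_mul, Finset.sum_ite_eq']
        _ = M x y := by
            have hay : a + y = x := by
              rw [h, add_assoc, qvec_add_self, add_zero]
            have hax : x + a = y := by
              rw [h]
              calc x + (x + y) = (x + x) + y := by ring
                _ = y := by rw [qvec_add_self, zero_add]
            rw [hay, hax]
            have h2 : (2:ℂ)^n ≠ 0 := pow_ne_zero _ two_ne_zero
            field_simp
    · rw [if_neg h]
      refine Finset.sum_eq_zero fun b _ => ?_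
      have hP0 : Pauli a b x y = 0 := by
        rw [Pauli, if_neg]
        intro hx
        apply h
        refine Eq.symm ?_
        rw [hx]
        calc (y + a) + y = a + (y + y) := by ring
          _ = a := by rw [qvec_add_self, add_zero]
      rw [hP0, mul_zero]
  rw [Finset.sum_congr rfl fun a _ => step1 a]
  simp [Finset.sum_ite_eq']


lemma chan_eq {n : ℕ} (U : Matrix (QVec n) (QVec n) ℂ) (r s : QVec n × QVec n) :
    chan U r s = ((1:ℂ)/2^n)
      * Matrix.trace (Pauli r.1 r.2 * (U * Pauli s.1 s.2 * Uᴴ)) := by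
  unfold chan
  congr 1
  simp only [Matrix.mul_assoc]


/-- A unitary `U` is Clifford iff its channel representation has exactly one non-zero
entry in each row and each column, that entry being `±1`. -/
theorem chan_clifford_iff (n : ℕ) (U : Matrix (QVec n) (QVec n) ℂ)
    (hU : U ∈ Matrix.unitaryGroup (QVec n) ℂ) :
    ((∀ r s, chan U r s = 0 ∨ chan U r s = 1 ∨ chan U r s = -1) ∧
      (∀ r, ∃! s, chan U r s ≠ 0) ∧ (∀ s, ∃! r, chan U r s ≠ 0)) ↔ IsClifford U := by
  constructor
  · rintro ⟨h1, h2, h3⟩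
    refine ⟨hU, fun a b => ?_⟩
    obtain ⟨r, hr, hruniq⟩ := h3 (a, b)
    refine ⟨r.1, r.2, chan U r (a, b), ?_, ?_⟩
    · rcases h1 r (a, b) with h | h | h
      · exact absurd h hr
      · exact Or.inl h
      · exact Or.inr h
    · calc U * Pauli a b * Uᴴ
          = ∑ s : QVec n × QVec n, chan U s (a, b) • Pauli s.1 s.2 := by
            rw [← pauli_expansion (U * Pauli a b * Uᴴ)]
            refine Finset.sum_congr rfl fun s _ => ?_
            rw [chan_eq U s (a, b)]
        _ = chan U r (a, b) • Pauli r.1 r.2 := by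
            refine Finset.sum_eq_single r (fun s _ hs => ?_)
              (fun h => absurd (Finset.mem_univ r) h)
            have : chan U s (a, b) = 0 := by
              by_contra hc; exact hs (hruniq s hc)
            rw [this, zero_smul]
  · rintro ⟨-, hC⟩
    choose a' b' ε hε heq using hC
    have hεne : ∀ p q : QVec n, ε p q ≠ 0 := fun p q => by
      rcases hε p q with h | h <;> rw [h] <;> norm_num
    have h2n : (2:ℂ)^n ≠ 0 := pow_ne_zero _ two_ne_zero
    set F : QVec n × QVec n → QVec n × QVec n :=
      fun s => (a' s.1 s.2, b' s.1 s.2) with hF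
    have hform : ∀ r s : QVec n × QVec n,
        chan U r s = if r = F s then ε s.1 s.2 else 0 := by
      intro r s
      rw [chan_eq, heq s.1 s.2, Matrix.mul_smul, Matrix.trace_smul,
        trace_pauli_pauli]
      by_cases h : r = F s
      · rw [if_pos h, if_pos ⟨congrArg Prod.fst h, congrArg Prod.snd h⟩]
        rw [smul_eq_mul]
        field_simp
      · rw [if_neg h, if_neg (fun hc => h (Prod.ext hc.1 hc.2)), smul_zero,
          mul_zero]
    have hFinj : Function.Injective F := by
      intro s₁ s₂ hF12
      have hU1 : Uᴴ * U = 1 := by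
        have := Matrix.mem_unitaryGroup_iff'.mp hU
        exact this
      have key : ∀ p : QVec n × QVec n,
          Uᴴ * (U * Pauli p.1 p.2 * Uᴴ) * U = Pauli p.1 p.2 := by
        intro p
        calc Uᴴ * (U * Pauli p.1 p.2 * Uᴴ) * U
            = (Uᴴ * U) * (Pauli p.1 p.2 * ((Uᴴ * U))) := by
              simp only [Matrix.mul_assoc]
          _ = Pauli p.1 p.2 := by rw [hU1]; simp
      have c0 : ε s₂.1 s₂.2 • (U * Pauli s₁.1 s₁.2 * Uᴴ)
          = ε s₁.1 s₁.2 • (U * Pauli s₂.1 s₂.2 * Uᴴ) := by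
        rw [heq s₁.1 s₁.2, heq s₂.1 s₂.2, smul_smul, smul_smul, mul_comm,
          show a' s₁.1 s₁.2 = a' s₂.1 s₂.2 from congrArg Prod.fst hF12,
          show b' s₁.1 s₁.2 = b' s₂.1 s₂.2 from congrArg Prod.snd hF12]
      have comb : ε s₂.1 s₂.2 • Pauli s₁.1 s₁.2
          = ε s₁.1 s₁.2 • Pauli s₂.1 s₂.2 := by
        have hc := congrArg (fun X => Uᴴ * X * U) c0
        simp only [Matrix.mul_smul, Matrix.smul_mul] at hc
        rwa [key s₁, key s₂] at hc
      have tr := congrArg (fun X => Matrix.trace (Pauli s₂.1 s₂.2 * X)) comb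
      simp only [Matrix.mul_smul, Matrix.trace_smul, smul_eq_mul] at tr
      rw [trace_pauli_pauli, trace_pauli_pauli,
        if_pos (show s₂.1 = s₂.1 ∧ s₂.2 = s₂.2 from ⟨rfl, rfl⟩)] at tr
      by_cases hss : s₂.1 = s₁.1 ∧ s₂.2 = s₁.2
      · exact (Prod.ext hss.1 hss.2).symm
      · rw [if_neg hss, mul_zero] at tr
        exact absurd tr.symm (mul_ne_zero (hεne _ _) h2n)
    have hFsurj : Function.Surjective F :=
      Finite.injective_iff_surjective.mp hFinj
    refine ⟨?_, ?_, ?_⟩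
    · intro r s
      rw [hform]
      by_cases h : r = F s
      · rw [if_pos h]
        rcases hε s.1 s.2 with h' | h'
        · exact Or.inr (Or.inl h')
        · exact Or.inr (Or.inr h')
      · exact Or.inl (if_neg h)
    · intro r
      obtain ⟨s, hs⟩ := hFsurj r
      refine ⟨s, ?_, ?_⟩
      · show chan U r s ≠ 0
        rw [hform, if_pos hs.symm]
        exact hεne _ _
      · intro s₂ hs₂
        rw [hform] at hs₂
        have hr2 : r = F s₂ := by
          by_contra hc
          rw [if_neg hc] at hs₂
          exact hs₂ rfl
        exact (hFinj (hs.trans hr2)).symm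
    · intro s
      refine ⟨F s, ?_, ?_⟩
      · show chan U (F s) s ≠ 0
        rw [hform, if_pos rfl]
        exact hεne _ _
      · intro r hr
        rw [hform] at hr
        by_contra hc
        rw [if_neg hc] at hr
        exact hr rfl
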